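/- Let D ≥ 1, let f: ℝ^D → ℝ^D be infinitely differentiable, and let Γ be a constant real symmetric D×D matrix. Define the generator A acting on smooth g: ℝ^D → ℝ by (A g)(x) = Σ_{i=1}^D ∂_i g(x)·f_i(x) + (1/2)·Σ_{i,j=1}^D ∂_i∂_j g(x)·Γ_{ij}, and A^r its r-fold iteration. For fixed coordinate indices u, v ∈ {1, …, D}, set α^u_r = A^r(x ↦ x_u), α^v_r = A^r(x ↦ x_v), β_r = A^r(x ↦ x_u·x_v), and Φ_r = β_r − Σ_{s=0}^r C(r,s)·α^u_s·α^v_{r−s} (pointwise products of functions). Then Φ_0 = 0 and for every r ≥ 1 and every x ∈ ℝ^D: Φ_r(x) = Σ_{i,j=1}^D Σ_{s=0}^{r−1} C(r−1,s)·∂_i α^u_s(x)·∂_j α^v_{r−1−s}(x)·Γ_{ij} + (A Φ_{r−1})(x). -/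

import Mathlib

/-- Partial derivative in the `i`-th coordinate of `g : ℝ^D → ℝ`. -/
noncomputable def pder {D : ℕ} (i : Fin D) (g : (Fin D → ℝ) → ℝ) :
    (Fin D → ℝ) → ℝ :=
  fun x => fderiv ℝ g x (Pi.single i 1)

/-- The (time-homogeneous) infinitesimal generator of the SDE
`dx = f(x) dt + L dW` with constant symmetric diffusion matrix `Γ = LQLᵀ`:
`(A g)(x) = Σ_i ∂_i g(x) f_i(x) + (1/2) Σ_{i,j} ∂_i ∂_j g(x) Γ_{ij}`. -/
noncomputable def gen {D : ℕ} (f : (Fin D → ℝ) → Fin D → ℝ)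
    (Γ : Matrix (Fin D) (Fin D) ℝ) (g : (Fin D → ℝ) → ℝ) : (Fin D → ℝ) → ℝ :=
  fun x => (∑ i, pder i g x * f x i)
    + (1 / 2) * ∑ i, ∑ j, pder i (pder j g) x * Γ i j

/-- `α^u_r = A^r(x ↦ x_u)`. -/
noncomputable def alph {D : ℕ} (f : (Fin D → ℝ) → Fin D → ℝ)
    (Γ : Matrix (Fin D) (Fin D) ℝ) (u : Fin D) (r : ℕ) : (Fin D → ℝ) → ℝ :=
  (gen f Γ)^[r] (fun x => x u)

/-- `β_r = A^r(x ↦ x_u x_v)`. -/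
noncomputable def bet {D : ℕ} (f : (Fin D → ℝ) → Fin D → ℝ)
    (Γ : Matrix (Fin D) (Fin D) ℝ) (u v : Fin D) (r : ℕ) : (Fin D → ℝ) → ℝ :=
  (gen f Γ)^[r] (fun x => x u * x v)

/-- The `r`-th TME covariance coefficient
`Φ_r = β_r − Σ_{s=0}^r C(r,s) α^u_s α^v_{r−s}`. -/
noncomputable def PhiCoeff {D : ℕ} (f : (Fin D → ℝ) → Fin D → ℝ)
    (Γ : Matrix (Fin D) (Fin D) ℝ) (u v : Fin D) (r : ℕ) : (Fin D → ℝ) → ℝ :=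
  fun x => bet f Γ u v r x
    - ∑ s ∈ Finset.range (r + 1),
        (r.choose s : ℝ) * alph f Γ u s x * alph f Γ v (r - s) x

lemma pder_smooth {D : ℕ} (i : Fin D) {g : (Fin D → ℝ) → ℝ}
    (hg : ContDiff ℝ (⊤ : ℕ∞) g) : ContDiff ℝ (⊤ : ℕ∞) (pder i g) :=
  (ContinuousLinearMap.apply ℝ ℝ (Pi.single i 1 : Fin D → ℝ)).contDiff.comp
    (hg.fderiv_right (by simp))

lemma pder_add {D : ℕ} (i : Fin D) {g h : (Fin D → ℝ) → ℝ}
    (hg : Differentiable ℝ g) (hh : Differentiable ℝ h) :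
    pder i (fun x => g x + h x) = fun x => pder i g x + pder i h x := by
  funext x; simp [pder, fderiv_fun_add (hg x) (hh x)]

lemma pder_sub {D : ℕ} (i : Fin D) {g h : (Fin D → ℝ) → ℝ}
    (hg : Differentiable ℝ g) (hh : Differentiable ℝ h) :
    pder i (fun x => g x - h x) = fun x => pder i g x - pder i h x := by
  funext x; simp [pder, fderiv_fun_sub (hg x) (hh x)]

lemma pder_mul {D : ℕ} (i : Fin D) {g h : (Fin D → ℝ) → ℝ}
    (hg : Differentiable ℝ g) (hh : Differentiable ℝ h) :
    pder i (fun x => g x * h x)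
      = fun x => pder i g x * h x + g x * pder i h x := by
  funext x; simp [pder, fderiv_fun_mul (hg x) (hh x)]; ring

lemma pder_const_mul {D : ℕ} (i : Fin D) (c : ℝ) {g : (Fin D → ℝ) → ℝ}
    (hg : Differentiable ℝ g) :
    pder i (fun x => c * g x) = fun x => c * pder i g x := by
  funext x; simp [pder, fderiv_const_mul (hg x) c]

lemma pder_sum {D : ℕ} (i : Fin D) {ι : Type*} (t : Finset ι)
    (g : ι → (Fin D → ℝ) → ℝ) (hg : ∀ s ∈ t, Differentiable ℝ (g s)) :
    pder i (fun x => ∑ s ∈ t, g s x) = fun x => ∑ s ∈ t, pder i (g s) x := by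
  funext x
  simp only [pder]
  rw [fderiv_fun_sum (fun s hs => (hg s hs) x)]
  simp

lemma gen_smooth {D : ℕ} {f : (Fin D → ℝ) → Fin D → ℝ} (hf : ContDiff ℝ (⊤ : ℕ∞) f)
    (Γ : Matrix (Fin D) (Fin D) ℝ) {g : (Fin D → ℝ) → ℝ}
    (hg : ContDiff ℝ (⊤ : ℕ∞) g) : ContDiff ℝ (⊤ : ℕ∞) (gen f Γ g) := by
  apply ContDiff.add
  · exact ContDiff.sum fun i _ =>
      (pder_smooth i hg).mul ((contDiff_pi.mp hf) i)
  · exact (contDiff_const).mul <| ContDiff.sum fun i _ => ContDiff.sum fun j _ =>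
      (pder_smooth i (pder_smooth j hg)).mul contDiff_const

lemma pder_zero {D : ℕ} (i : Fin D) :
    pder i (fun _ : Fin D → ℝ => (0:ℝ)) = fun _ => 0 := by
  funext x; simp [pder]

section
variable {D : ℕ} {f : (Fin D → ℝ) → Fin D → ℝ} {Γ : Matrix (Fin D) (Fin D) ℝ}

lemma gen_add {g h : (Fin D → ℝ) → ℝ} (hg : ContDiff ℝ (⊤ : ℕ∞) g)
    (hh : ContDiff ℝ (⊤ : ℕ∞) h) :
    gen f Γ (fun x => g x + h x) = fun x => gen f Γ g x + gen f Γ h x := by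
  have hg1 := hg.differentiable (by simp)
  have hh1 := hh.differentiable (by simp)
  funext x
  have h2 : ∀ i j : Fin D, pder i (pder j (fun x => g x + h x)) x
      = pder i (pder j g) x + pder i (pder j h) x := by
    intro i j
    rw [pder_add j hg1 hh1, pder_add i ((pder_smooth j hg).differentiable (by simp))
      ((pder_smooth j hh).differentiable (by simp))]
  have h1 : ∀ i : Fin D, pder i (fun x => g x + h x) x = pder i g x + pder i h x :=
    fun i => congrFun (pder_add i hg1 hh1) x
  simp only [gen, h1, h2, add_mul, Finset.sum_add_distrib, mul_add]
  ring

lemma gen_sub {g h : (Fin D → ℝ) → ℝ} (hg : ContDiff ℝ (⊤ : ℕ∞) g)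
    (hh : ContDiff ℝ (⊤ : ℕ∞) h) :
    gen f Γ (fun x => g x - h x) = fun x => gen f Γ g x - gen f Γ h x := by
  have hg1 := hg.differentiable (by simp)
  have hh1 := hh.differentiable (by simp)
  funext x
  have h2 : ∀ i j : Fin D, pder i (pder j (fun x => g x - h x)) x
      = pder i (pder j g) x - pder i (pder j h) x := by
    intro i j
    rw [pder_sub j hg1 hh1, pder_sub i ((pder_smooth j hg).differentiable (by simp))
      ((pder_smooth j hh).differentiable (by simp))]
  have h1 : ∀ i : Fin D, pder i (fun x => g x - h x) x = pder i g x - pder i h x :=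
    fun i => congrFun (pder_sub i hg1 hh1) x
  simp only [gen, h1, h2, sub_mul, Finset.sum_sub_distrib, mul_sub]
  ring

lemma gen_const_mul (c : ℝ) {g : (Fin D → ℝ) → ℝ} (hg : ContDiff ℝ (⊤ : ℕ∞) g) :
    gen f Γ (fun x => c * g x) = fun x => c * gen f Γ g x := by
  have hg1 := hg.differentiable (by simp)
  funext x
  have h2 : ∀ i j : Fin D, pder i (pder j (fun x => c * g x)) x
      = c * pder i (pder j g) x := by
    intro i j
    rw [pder_const_mul j c hg1, pder_const_mul i c
      ((pder_smooth j hg).differentiable (by simp))]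
  have h1 : ∀ i : Fin D, pder i (fun x => c * g x) x = c * pder i g x :=
    fun i => congrFun (pder_const_mul i c hg1) x
  simp only [gen, h1, h2, mul_assoc, ← Finset.mul_sum]
  ring

lemma gen_zero : gen f Γ (fun _ : Fin D → ℝ => (0:ℝ)) = fun _ => 0 := by
  funext x
  have h2 : ∀ i j : Fin D, pder i (pder j (fun _ : Fin D → ℝ => (0:ℝ))) x = 0 := by
    intro i j
    rw [pder_zero j, pder_zero i]
  have h1 : ∀ i : Fin D, pder i (fun _ : Fin D → ℝ => (0:ℝ)) x = 0 :=
    fun i => congrFun (pder_zero i) x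
  simp [gen, h1, h2]

lemma gen_sum {ι : Type*} (t : Finset ι) (g : ι → (Fin D → ℝ) → ℝ)
    (hg : ∀ s ∈ t, ContDiff ℝ (⊤ : ℕ∞) (g s)) :
    gen f Γ (fun x => ∑ s ∈ t, g s x) = fun x => ∑ s ∈ t, gen f Γ (g s) x := by
  classical
  induction t using Finset.induction_on with
  | empty => simpa using gen_zero (f := f) (Γ := Γ)
  | insert a t ha ih =>
    have hga := hg a (Finset.mem_insert_self a t)
    have hgt : ∀ s ∈ t, ContDiff ℝ (⊤ : ℕ∞) (g s) :=
      fun s hs => hg s (Finset.mem_insert_of_mem hs)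
    have hsum : ContDiff ℝ (⊤ : ℕ∞) (fun x => ∑ s ∈ t, g s x) :=
      ContDiff.sum fun s hs => hgt s hs
    have : (fun x => ∑ s ∈ insert a t, g s x)
        = fun x => g a x + ∑ s ∈ t, g s x := by
      funext x; rw [Finset.sum_insert ha]
    rw [this, gen_add hga hsum, ih hgt]
    funext x
    rw [Finset.sum_insert ha]

lemma gen_mul (hΓ : Γ.IsSymm) {g h : (Fin D → ℝ) → ℝ}
    (hg : ContDiff ℝ (⊤ : ℕ∞) g) (hh : ContDiff ℝ (⊤ : ℕ∞) h) (x : Fin D → ℝ) :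
    gen f Γ (fun x => g x * h x) x
      = g x * gen f Γ h x + h x * gen f Γ g x
        + ∑ i, ∑ j, pder i g x * pder j h x * Γ i j := by
  have hg1 := hg.differentiable (by simp)
  have hh1 := hh.differentiable (by simp)
  have h2 : ∀ i j : Fin D, pder i (pder j (fun x => g x * h x)) x
      = pder i (pder j g) x * h x + pder j g x * pder i h x
        + (pder i g x * pder j h x + g x * pder i (pder j h) x) := by
    intro i j
    rw [pder_mul j hg1 hh1,
      pder_add i (((pder_smooth j hg).mul hh).differentiable (by simp))
        ((hg.mul (pder_smooth j hh)).differentiable (by simp))]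
    beta_reduce
    rw [congrFun (pder_mul i ((pder_smooth j hg).differentiable (by simp)) hh1) x,
      congrFun (pder_mul i hg1 ((pder_smooth j hh).differentiable (by simp))) x]
  have h1 : ∀ i : Fin D, pder i (fun x => g x * h x) x
      = pder i g x * h x + g x * pder i h x :=
    fun i => congrFun (pder_mul i hg1 hh1) x
  have hsym : ∑ i, ∑ j, pder j g x * pder i h x * Γ i j
      = ∑ i, ∑ j, pder i g x * pder j h x * Γ i j := by
    rw [Finset.sum_comm]
    refine Finset.sum_congr rfl fun i _ => Finset.sum_congr rfl fun j _ => ?_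
    rw [hΓ.apply]
  have e1 : ∑ i, pder i (fun x => g x * h x) x * f x i
      = (∑ i, pder i g x * f x i) * h x + g x * ∑ i, pder i h x * f x i := by
    simp only [h1, add_mul, Finset.sum_add_distrib, Finset.sum_mul, Finset.mul_sum]
    congr 1
    · exact Finset.sum_congr rfl fun i _ => by ring
    · exact Finset.sum_congr rfl fun i _ => by ring
  have e2 : ∑ i, ∑ j, pder i (pder j (fun x => g x * h x)) x * Γ i j
      = (∑ i, ∑ j, pder i (pder j g) x * Γ i j) * h x
        + g x * (∑ i, ∑ j, pder i (pder j h) x * Γ i j)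
        + 2 * ∑ i, ∑ j, pder i g x * pder j h x * Γ i j := by
    have expand : ∀ i j : Fin D, pder i (pder j (fun x => g x * h x)) x * Γ i j
        = (pder i (pder j g) x * Γ i j) * h x
          + pder j g x * pder i h x * Γ i j
          + pder i g x * pder j h x * Γ i j
          + g x * (pder i (pder j h) x * Γ i j) := fun i j => by rw [h2 i j]; ring
    simp only [expand, Finset.sum_add_distrib, ← Finset.sum_mul, ← Finset.mul_sum]
    rw [hsym]; ring
  simp only [gen, e1, e2]
  ring

end

lemma alph_smooth {D : ℕ} {f : (Fin D → ℝ) → Fin D → ℝ} (hf : ContDiff ℝ (⊤ : ℕ∞) f)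
    (Γ : Matrix (Fin D) (Fin D) ℝ) (u : Fin D) (r : ℕ) :
    ContDiff ℝ (⊤ : ℕ∞) (alph f Γ u r) := by
  induction r with
  | zero => exact (ContinuousLinearMap.proj u : (Fin D → ℝ) →L[ℝ] ℝ).contDiff
  | succ n ih =>
    rw [alph, Function.iterate_succ_apply']
    exact gen_smooth hf Γ ih

lemma bet_smooth {D : ℕ} {f : (Fin D → ℝ) → Fin D → ℝ} (hf : ContDiff ℝ (⊤ : ℕ∞) f)
    (Γ : Matrix (Fin D) (Fin D) ℝ) (u v : Fin D) (r : ℕ) :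
    ContDiff ℝ (⊤ : ℕ∞) (bet f Γ u v r) := by
  induction r with
  | zero =>
    exact ((ContinuousLinearMap.proj u : (Fin D → ℝ) →L[ℝ] ℝ).contDiff).mul
      (ContinuousLinearMap.proj v : (Fin D → ℝ) →L[ℝ] ℝ).contDiff
  | succ n ih =>
    rw [bet, Function.iterate_succ_apply']
    exact gen_smooth hf Γ ih

lemma alph_succ {D : ℕ} (f : (Fin D → ℝ) → Fin D → ℝ)
    (Γ : Matrix (Fin D) (Fin D) ℝ) (u : Fin D) (r : ℕ) :
    gen f Γ (alph f Γ u r) = alph f Γ u (r + 1) :=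
  (Function.iterate_succ_apply' _ _ _).symm

lemma bet_succ {D : ℕ} (f : (Fin D → ℝ) → Fin D → ℝ)
    (Γ : Matrix (Fin D) (Fin D) ℝ) (u v : Fin D) (r : ℕ) :
    gen f Γ (bet f Γ u v r) = bet f Γ u v (r + 1) :=
  (Function.iterate_succ_apply' _ _ _).symm

lemma choose_split (n : ℕ) (T : ℕ → ℝ) :
    ∑ s ∈ Finset.range (n+2), ((n+1).choose s : ℝ) * T s
      = ∑ s ∈ Finset.range (n+1), (n.choose s : ℝ) * T s
        + ∑ s ∈ Finset.range (n+1), (n.choose s : ℝ) * T (s+1) := by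
  rw [Finset.sum_range_succ' (fun s => ((n+1).choose s : ℝ) * T s) (n+1)]
  have h1 : ∀ s, ((n+1).choose (s+1) : ℝ) = (n.choose s : ℝ) + (n.choose (s+1) : ℝ) := by
    intro s; rw [Nat.choose_succ_succ]; push_cast; ring
  simp only [h1, add_mul, Finset.sum_add_distrib]
  have h2 : ∑ s ∈ Finset.range (n+1), (n.choose (s+1) : ℝ) * T (s+1)
      + ((n+1).choose 0 : ℝ) * T 0 = ∑ s ∈ Finset.range (n+1), (n.choose s : ℝ) * T s := by
    rw [Finset.sum_range_succ (fun s => (n.choose (s+1) : ℝ) * T (s+1)) n,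
      Finset.sum_range_succ' (fun s => (n.choose s : ℝ) * T s) n]
    simp [Nat.choose_succ_self]
  linarith [h2]
/-- Lemma 1 of the paper: the recursion for the entries of the TME covariance
coefficient matrices, `Φ_0 = 0` and for `r ≥ 1`
`Φ_r(x) = Σ_{i,j} Σ_{s=0}^{r−1} C(r−1,s) ∂_i α^u_s(x) ∂_j α^v_{r−1−s}(x) Γ_{ij} + (A Φ_{r−1})(x)`. -/
theorem tme_phi_recursion
    {D : ℕ} (hD : 1 ≤ D)
    (f : (Fin D → ℝ) → Fin D → ℝ) (hf : ContDiff ℝ (⊤ : ℕ∞) f)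
    (Γ : Matrix (Fin D) (Fin D) ℝ) (hΓ : Γ.IsSymm) (u v : Fin D) :
    PhiCoeff f Γ u v 0 = 0 ∧
      ∀ r : ℕ, 1 ≤ r → ∀ x : Fin D → ℝ,
        PhiCoeff f Γ u v r x =
          (∑ i, ∑ j, ∑ s ∈ Finset.range r,
            ((r - 1).choose s : ℝ) * pder i (alph f Γ u s) x
              * pder j (alph f Γ v (r - 1 - s)) x * Γ i j)
          + gen f Γ (PhiCoeff f Γ u v (r - 1)) x := by
  constructor
  · funext x
    simp [PhiCoeff, bet, alph]
  · intro r hr x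
    obtain ⟨n, rfl⟩ : ∃ n, r = n + 1 := ⟨r - 1, (Nat.succ_pred_eq_of_pos hr).symm⟩
    simp only [Nat.add_sub_cancel]
    have hau : ∀ s, ContDiff ℝ (⊤ : ℕ∞) (alph f Γ u s) := alph_smooth hf Γ u
    have hav : ∀ s, ContDiff ℝ (⊤ : ℕ∞) (alph f Γ v s) := alph_smooth hf Γ v
    -- rewrite PhiCoeff n
    have hPhi : PhiCoeff f Γ u v n = fun y => bet f Γ u v n y
        - ∑ s ∈ Finset.range (n+1),
            (n.choose s : ℝ) * (alph f Γ u s y * alph f Γ v (n - s) y) := by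
      funext y; simp [PhiCoeff, mul_assoc]
    have hS : ContDiff ℝ (⊤ : ℕ∞) (fun y => ∑ s ∈ Finset.range (n+1),
        (n.choose s : ℝ) * (alph f Γ u s y * alph f Γ v (n - s) y)) :=
      ContDiff.sum fun s _ => contDiff_const.mul ((hau s).mul (hav (n - s)))
    have hgenPhi : gen f Γ (PhiCoeff f Γ u v n) x
        = bet f Γ u v (n+1) x
          - ∑ s ∈ Finset.range (n+1), (n.choose s : ℝ) *
              (alph f Γ u s x * alph f Γ v (n + 1 - s) x
                + alph f Γ v (n - s) x * alph f Γ u (s+1) x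
                + ∑ i, ∑ j, pder i (alph f Γ u s) x * pder j (alph f Γ v (n - s)) x * Γ i j) := by
      rw [hPhi, gen_sub (bet_smooth hf Γ u v n) hS]
      have e1 : gen f Γ (bet f Γ u v n) x = bet f Γ u v (n+1) x := by
        rw [bet_succ]
      have e2 : gen f Γ (fun y => ∑ s ∈ Finset.range (n+1),
          (n.choose s : ℝ) * (alph f Γ u s y * alph f Γ v (n - s) y)) x
          = ∑ s ∈ Finset.range (n+1), (n.choose s : ℝ) *
              (alph f Γ u s x * alph f Γ v (n + 1 - s) x
                + alph f Γ v (n - s) x * alph f Γ u (s+1) x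
                + ∑ i, ∑ j, pder i (alph f Γ u s) x * pder j (alph f Γ v (n - s)) x * Γ i j) := by
        rw [gen_sum (Finset.range (n+1))
          (fun s y => (n.choose s : ℝ) * (alph f Γ u s y * alph f Γ v (n - s) y))
          (fun s _ => contDiff_const.mul ((hau s).mul (hav (n - s))))]
        refine Finset.sum_congr rfl fun s hs => ?_
        rw [gen_const_mul (n.choose s : ℝ) ((hau s).mul (hav (n - s)))]
        have := gen_mul (f := f) hΓ (hau s) (hav (n - s)) x
        beta_reduce
        rw [this, congrFun (alph_succ f Γ u s) x, congrFun (alph_succ f Γ v (n - s)) x]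
        have hns : n - s + 1 = n + 1 - s :=
          (Nat.succ_sub (Nat.lt_succ_iff.mp (Finset.mem_range.mp hs))).symm
        rw [hns]
      simp only [e1, e2]
    -- the binomial identity
    have hA : ∑ s ∈ Finset.range (n+2), ((n+1).choose s : ℝ)
          * alph f Γ u s x * alph f Γ v (n + 1 - s) x
        = ∑ s ∈ Finset.range (n+1), (n.choose s : ℝ)
            * (alph f Γ u s x * alph f Γ v (n + 1 - s) x)
          + ∑ s ∈ Finset.range (n+1), (n.choose s : ℝ)
            * (alph f Γ v (n - s) x * alph f Γ u (s+1) x) := by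
      have h := choose_split n (fun s => alph f Γ u s x * alph f Γ v (n + 1 - s) x)
      simp only [Nat.succ_sub_succ] at h
      simp only [← mul_assoc] at h
      rw [h]
      congr 1
      · exact Finset.sum_congr rfl fun s _ => by ring
      · exact Finset.sum_congr rfl fun s _ => by ring
    -- reorder the Γ triple sum
    have hB : ∑ i, ∑ j, ∑ s ∈ Finset.range (n+1),
          (n.choose s : ℝ) * pder i (alph f Γ u s) x
            * pder j (alph f Γ v (n - s)) x * Γ i j
        = ∑ s ∈ Finset.range (n+1), (n.choose s : ℝ) *
            ∑ i, ∑ j, pder i (alph f Γ u s) x * pder j (alph f Γ v (n - s)) x * Γ i j :=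
      calc ∑ i, ∑ j, ∑ s ∈ Finset.range (n+1), (n.choose s : ℝ) * pder i (alph f Γ u s) x
            * pder j (alph f Γ v (n - s)) x * Γ i j
          = ∑ i, ∑ s ∈ Finset.range (n+1), ∑ j, (n.choose s : ℝ) * pder i (alph f Γ u s) x
            * pder j (alph f Γ v (n - s)) x * Γ i j :=
            Finset.sum_congr rfl fun i _ => Finset.sum_comm
        _ = ∑ s ∈ Finset.range (n+1), ∑ i, ∑ j, (n.choose s : ℝ) * pder i (alph f Γ u s) x
            * pder j (alph f Γ v (n - s)) x * Γ i j := Finset.sum_comm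
        _ = ∑ s ∈ Finset.range (n+1), (n.choose s : ℝ) *
            ∑ i, ∑ j, pder i (alph f Γ u s) x * pder j (alph f Γ v (n - s)) x * Γ i j := by
            refine Finset.sum_congr rfl fun s _ => ?_
            rw [Finset.mul_sum]
            refine Finset.sum_congr rfl fun i _ => ?_
            rw [Finset.mul_sum]
            exact Finset.sum_congr rfl fun j _ => by ring
    have hC : ∑ s ∈ Finset.range (n+1), (n.choose s : ℝ) *
          (alph f Γ u s x * alph f Γ v (n + 1 - s) x
            + alph f Γ v (n - s) x * alph f Γ u (s+1) x
            + ∑ i, ∑ j, pder i (alph f Γ u s) x * pder j (alph f Γ v (n - s)) x * Γ i j)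
        = ∑ s ∈ Finset.range (n+1), (n.choose s : ℝ)
            * (alph f Γ u s x * alph f Γ v (n + 1 - s) x)
          + ∑ s ∈ Finset.range (n+1), (n.choose s : ℝ)
            * (alph f Γ v (n - s) x * alph f Γ u (s+1) x)
          + ∑ s ∈ Finset.range (n+1), (n.choose s : ℝ) *
            ∑ i, ∑ j, pder i (alph f Γ u s) x * pder j (alph f Γ v (n - s)) x * Γ i j := by
      simp only [mul_add, Finset.sum_add_distrib]
    rw [hgenPhi, hB, hC]
    simp only [PhiCoeff]
    rw [hA]
    ring
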